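/- arXiv:1304.3358 — 7 statements merged into one kernel-verified Lean document; each statement's English description precedes it below -/
import Mathlib

section
/- Let X be a nonempty set with an operation Δ : X × X → X such that (1) Δ(Δ(a,b), Δ(a,c)) = Δ(b,c) for all a,b,c ∈ X, and (2) for each a ∈ X the map z ↦ Δ(z,a) is injective. Then for any nonempty subsets A, B, C ⊆ X there exists an injection from Δ(C,A) × B into Δ(B,C) × Δ(B,A), where Δ(S,T) = {Δ(s,t) : s ∈ S, t ∈ T}. -/
theorem stmt_0 {X : Type*} [Nonempty X] (Δ : X → X → X)
    (h1 : ∀ a b c : X, Δ (Δ a b) (Δ a c) = Δ b c)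
    (h2 : ∀ a : X, Function.Injective (fun z => Δ z a))
    (A B C : Set X) (hA : A.Nonempty) (hB : B.Nonempty) (hC : C.Nonempty) :
    ∃ i : (Set.image2 Δ C A × B) → (Set.image2 Δ B C × Set.image2 Δ B A),
      Function.Injective i := by
  classical
  choose c hc a ha hx using fun x : Set.image2 Δ C A => x.2
  refine ⟨fun p => (⟨Δ p.2 (c p.1), Set.mem_image2_of_mem p.2.2 (hc p.1)⟩,
      ⟨Δ p.2 (a p.1), Set.mem_image2_of_mem p.2.2 (ha p.1)⟩), ?_⟩
  rintro ⟨x, b⟩ ⟨y, b'⟩ h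
  simp only [Prod.mk.injEq, Subtype.mk.injEq] at h
  obtain ⟨e1, e2⟩ := h
  have hxy : (x : X) = y := by
    rw [← hx x, ← hx y, ← h1 (b : X) (c x) (a x), ← h1 (b' : X) (c y) (a y), e1, e2]
  have hxy' : x = y := Subtype.ext hxy
  subst hxy'
  have hb : (b : X) = b' := h2 (a x) e2
  simp [Subtype.ext hb]
end

section
/- Let X be a nonempty set with an operation Δ : X × X → X satisfying Δ(Δ(a,b), Δ(a,c)) = Δ(b,c) for all a,b,c and injectivity of z ↦ Δ(z,a) for each a. Then for any finite nonempty subsets A, B, C ⊆ X, |Δ(C,A)| · |B| ≤ |Δ(B,C)| · |Δ(B,A)|. -/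
theorem stmt_1 {X : Type*} [Nonempty X] [DecidableEq X] (Δ : X → X → X)
    (h1 : ∀ a b c : X, Δ (Δ a b) (Δ a c) = Δ b c)
    (h2 : ∀ a : X, Function.Injective (fun z => Δ z a))
    (A B C : Finset X) (hA : A.Nonempty) (hB : B.Nonempty) (hC : C.Nonempty) :
    (Finset.image₂ Δ C A).card * B.card ≤
      (Finset.image₂ Δ B C).card * (Finset.image₂ Δ B A).card := by
  classical
  set pick : X → X × X := fun d =>
    if h : ∃ p : X × X, p.1 ∈ C ∧ p.2 ∈ A ∧ Δ p.1 p.2 = d then h.choose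
    else (Classical.arbitrary X, Classical.arbitrary X) with hpick
  have hpick_spec : ∀ d ∈ Finset.image₂ Δ C A,
      (pick d).1 ∈ C ∧ (pick d).2 ∈ A ∧ Δ (pick d).1 (pick d).2 = d := by
    intro d hd
    rw [Finset.mem_image₂] at hd
    obtain ⟨c, hc, a, ha, hca⟩ := hd
    have h : ∃ p : X × X, p.1 ∈ C ∧ p.2 ∈ A ∧ Δ p.1 p.2 = d := ⟨(c, a), hc, ha, hca⟩
    simp only [hpick, dif_pos h]
    exact h.choose_spec
  set f : X × X → X × X := fun q => (Δ q.2 (pick q.1).1, Δ q.2 (pick q.1).2) with hf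
  have hmaps : ∀ q ∈ (Finset.image₂ Δ C A) ×ˢ B,
      f q ∈ (Finset.image₂ Δ B C) ×ˢ (Finset.image₂ Δ B A) := by
    intro q hq
    rw [Finset.mem_product] at hq ⊢
    obtain ⟨hc, ha, _⟩ := hpick_spec q.1 hq.1
    exact ⟨Finset.mem_image₂_of_mem hq.2 hc, Finset.mem_image₂_of_mem hq.2 ha⟩
  have hinj : Set.InjOn f ((Finset.image₂ Δ C A) ×ˢ B : Finset (X × X)) := by
    intro q hq q' hq' heq
    simp only [Finset.coe_product, Set.mem_prod, Finset.mem_coe] at hq hq'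
    obtain ⟨hc, ha, hd⟩ := hpick_spec q.1 hq.1
    obtain ⟨hc', ha', hd'⟩ := hpick_spec q'.1 hq'.1
    have h1' : Δ (f q).1 (f q).2 = q.1 := by
      simp only [hf]; rw [h1, hd]
    have h2' : Δ (f q').1 (f q').2 = q'.1 := by
      simp only [hf]; rw [h1, hd']
    have hd1 : q.1 = q'.1 := by rw [← h1', ← h2', heq]
    have hb : q.2 = q'.2 := by
      have := congrArg Prod.fst heq
      simp only [hf, hd1] at this
      exact h2 (pick q'.1).1 this
    exact Prod.ext hd1 hb
  have := Finset.card_le_card_of_injOn f hmaps hinj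
  simpa [Finset.card_product] using this
end

section
/- Let X be a nonempty set with Δ : X × X → X such that there exists F : X × X → X with F(Δ(a,b), Δ(a,c)) = Δ(b,c) for all a,b,c ∈ X, and there exists G : X × X → X such that for every b ∈ X the map a ↦ G(Δ(a,b), b) is injective. Then for any nonempty subsets A, B, C ⊆ X there is an injection from Δ(C,A) × B into Δ(B,C) × Δ(B,A). -/
theorem stmt_2 {X : Type*} [Nonempty X] (Δ : X → X → X)
    (h1 : ∃ F : X → X → X, ∀ a b c : X, F (Δ a b) (Δ a c) = Δ b c)
    (h2 : ∃ G : X → X → X, ∀ b : X, Function.Injective (fun a => G (Δ a b) b))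
    (A B C : Set X) (hA : A.Nonempty) (hB : B.Nonempty) (hC : C.Nonempty) :
    ∃ i : (Set.image2 Δ C A × B) → (Set.image2 Δ B C × Set.image2 Δ B A),
      Function.Injective i := by
  obtain ⟨F, hF⟩ := h1
  obtain ⟨G, hG⟩ := h2
  have hrep : ∀ x : Set.image2 Δ C A, ∃ p : X × X, p.1 ∈ C ∧ p.2 ∈ A ∧ Δ p.1 p.2 = x := by
    rintro ⟨x, hx⟩
    obtain ⟨c, hc, a, ha, rfl⟩ := hx
    exact ⟨(c, a), hc, ha, rfl⟩
  choose r hc ha hr using hrep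
  refine ⟨fun p => (⟨Δ p.2 (r p.1).1, Set.mem_image2_of_mem p.2.2 (hc p.1)⟩,
                    ⟨Δ p.2 (r p.1).2, Set.mem_image2_of_mem p.2.2 (ha p.1)⟩), ?_⟩
  rintro ⟨x, b⟩ ⟨y, b'⟩ h
  simp only [Prod.mk.injEq, Subtype.mk.injEq] at h
  obtain ⟨h₁, h₂⟩ := h
  have hxy : x = y := by
    have e1 : F (Δ b (r x).1) (Δ b (r x).2) = (x : X) := by rw [hF, hr]
    have e2 : F (Δ (b' : X) (r y).1) (Δ (b' : X) (r y).2) = (y : X) := by rw [hF, hr]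
    apply Subtype.ext
    rw [← e1, h₁, h₂, e2]
  subst hxy
  have hb : b = b' := by
    apply Subtype.ext
    exact hG (r x).1 (congrArg (fun z => G z (r x).1) h₁)
  rw [hb]
end

section
/- Let X be a nonempty set with Δ satisfying the weak hypotheses: there exists F : X × X → X with F(Δ(a,b), Δ(a,c)) = Δ(b,c) for all a,b,c, and there exists G : X × X → X such that a ↦ G(Δ(a,b), b) is injective for each b. Then for all finite nonempty A, B, C ⊆ X, |Δ(C,A)| · |B| ≤ |Δ(B,C)| · |Δ(B,A)|. -/
theorem stmt_3 {X : Type*} [Nonempty X] [DecidableEq X] (Δ : X → X → X)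
    (h1 : ∃ F : X → X → X, ∀ a b c : X, F (Δ a b) (Δ a c) = Δ b c)
    (h2 : ∃ G : X → X → X, ∀ b : X, Function.Injective (fun a => G (Δ a b) b))
    (A B C : Finset X) (hA : A.Nonempty) (hB : B.Nonempty) (hC : C.Nonempty) :
    (Finset.image₂ Δ C A).card * B.card ≤
      (Finset.image₂ Δ B C).card * (Finset.image₂ Δ B A).card := by
  classical
  obtain ⟨F, hF⟩ := h1
  obtain ⟨G, hG⟩ := h2
  have hchoose : ∀ d ∈ Finset.image₂ Δ C A, ∃ c ∈ C, ∃ a ∈ A, Δ c a = d := by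
    intro d hd
    obtain ⟨c, hc, a, ha, hd'⟩ := Finset.mem_image₂.mp hd
    exact ⟨c, hc, a, ha, hd'⟩
  choose! c hc a ha hd using hchoose
  rw [← Finset.card_product, ← Finset.card_product]
  apply Finset.card_le_card_of_injOn (fun p => (Δ p.2 (c p.1), Δ p.2 (a p.1)))
  · rintro ⟨d, b⟩ hp
    simp only [Finset.mem_coe, Finset.mem_product] at hp ⊢
    exact ⟨Finset.mem_image₂_of_mem hp.2 (hc d hp.1),
      Finset.mem_image₂_of_mem hp.2 (ha d hp.1)⟩
  · rintro ⟨d1, b1⟩ hp1 ⟨d2, b2⟩ hp2 heq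
    simp only [Finset.mem_coe, Finset.mem_product] at hp1 hp2
    simp only [Prod.mk.injEq] at heq
    have e1 : F (Δ b1 (c d1)) (Δ b1 (a d1)) = d1 := by rw [hF, hd d1 hp1.1]
    have e2 : F (Δ b2 (c d2)) (Δ b2 (a d2)) = d2 := by rw [hF, hd d2 hp2.1]
    have hdd : d1 = d2 := by rw [← e1, ← e2, heq.1, heq.2]
    have hbb : b1 = b2 := by
      apply hG (c d1)
      simp only
      rw [heq.1, hdd]
    simp [hdd, hbb]
end

section
/- Let G be an additive group (not necessarily abelian) with Δ(a,b) = -a + b. For nonempty subsets A, B, C ⊆ G, the map i : Δ(C,A) × B → Δ(B,C) × Δ(B,A) defined by i(x,b) = (-b + f(x), -b + g(x)), where f : Δ(C,A) → C and g : Δ(C,A) → A are any functions with x = -f(x) + g(x) for all x ∈ Δ(C,A), is injective. -/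
theorem stmt_8 {G : Type*} [AddGroup G] (A B C : Set G)
    (hA : A.Nonempty) (hB : B.Nonempty) (hC : C.Nonempty)
    (f g : G → G)
    (hf : ∀ x ∈ Set.image2 (fun s t : G => -s + t) C A, f x ∈ C)
    (hg : ∀ x ∈ Set.image2 (fun s t : G => -s + t) C A, g x ∈ A)
    (hfg : ∀ x ∈ Set.image2 (fun s t : G => -s + t) C A, x = -f x + g x) :
    Set.InjOn (fun p : G × G => (-p.2 + f p.1, -p.2 + g p.1))
      ((Set.image2 (fun s t : G => -s + t) C A) ×ˢ B) := by
  rintro ⟨x, b⟩ ⟨hx, hb⟩ ⟨y, c⟩ ⟨hy, hc⟩ h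
  simp only [Prod.mk.injEq] at h
  obtain ⟨h1, h2⟩ := h
  have key : ∀ z w : G, -(-w + f z) + (-w + g z) = -f z + g z := by
    intro z w
    simp [neg_add_rev, add_assoc]
    
  have hxy : x = y :=
    calc x = -f x + g x := hfg x hx
    _ = -(-b + f x) + (-b + g x) := (key x b).symm
    _ = -(-c + f y) + (-c + g y) := by rw [h1, h2]
    _ = -f y + g y := key y c
    _ = y := (hfg y hy).symm
  subst hxy
  have hbc : b = c := by
    have := add_right_cancel h1
    exact neg_injective this
  simp [hbc]
end

section
/- In any group G (multiplicative, not necessarily abelian) and finite nonempty subsets A, B, C ⊆ G, there is an explicit injection from (C⁻¹·A) × B into (B⁻¹·C) × (B⁻¹·A) given by (x, b) ↦ (b⁻¹ f(x), b⁻¹ g(x)), where f and g are choice functions with x = f(x)⁻¹ g(x), f(x) ∈ C, g(x) ∈ A. -/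
theorem stmt_10 {G : Type*} [Group G] (A B C : Set G)
    (f g : G → G)
    (hf : ∀ x ∈ Set.image2 (fun s t : G => s⁻¹ * t) C A, f x ∈ C)
    (hg : ∀ x ∈ Set.image2 (fun s t : G => s⁻¹ * t) C A, g x ∈ A)
    (hfg : ∀ x ∈ Set.image2 (fun s t : G => s⁻¹ * t) C A, x = (f x)⁻¹ * g x) :
    Set.InjOn (fun p : G × G => ((p.2)⁻¹ * f p.1, (p.2)⁻¹ * g p.1))
      ((Set.image2 (fun s t : G => s⁻¹ * t) C A) ×ˢ B) := by
  rintro ⟨x1, b1⟩ ⟨hx1, hb1⟩ ⟨x2, b2⟩ ⟨hx2, hb2⟩ h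
  simp only [Prod.mk.injEq] at h
  obtain ⟨h1, h2⟩ := h
  have hx : x1 = x2 := by
    rw [hfg x1 hx1, hfg x2 hx2]
    have : (b1⁻¹ * f x1)⁻¹ * (b1⁻¹ * g x1) = (b2⁻¹ * f x2)⁻¹ * (b2⁻¹ * g x2) := by
      rw [h1, h2]
    simpa [mul_assoc] using this
  have hb : b1 = b2 := by
    subst hx
    have := h1
    simp at this
    exact this
  simp [hx, hb]
end

section
/- Let X be a nonempty set with Δ satisfying conditions (1) and (2) of Proposition 1. Then for any finite nonempty subsets A, C ⊆ X and any b ∈ X, the map x ↦ (Δ(b, f(x)), Δ(b, g(x))) from Δ(C,A) to X × X is injective, where f, g are choice functions with x = Δ(f(x), g(x)), f(x) ∈ C, g(x) ∈ A. Consequently |Δ(C,A)| ≤ |Δ({b},C)| · |Δ({b},A)|. -/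
theorem stmt_11 {X : Type*} [Nonempty X] [DecidableEq X] (Δ : X → X → X)
    (h1 : ∀ a b c : X, Δ (Δ a b) (Δ a c) = Δ b c)
    (h2 : ∀ a : X, Function.Injective (fun z => Δ z a))
    (A C : Finset X) (hA : A.Nonempty) (hC : C.Nonempty) (b : X)
    (f g : X → X)
    (hf : ∀ x ∈ Finset.image₂ Δ C A, f x ∈ C)
    (hg : ∀ x ∈ Finset.image₂ Δ C A, g x ∈ A)
    (hfg : ∀ x ∈ Finset.image₂ Δ C A, x = Δ (f x) (g x)) :
    Set.InjOn (fun x => (Δ b (f x), Δ b (g x))) ↑(Finset.image₂ Δ C A) ∧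
    (Finset.image₂ Δ C A).card ≤
      (Finset.image₂ Δ {b} C).card * (Finset.image₂ Δ {b} A).card := by
  have key : ∀ x ∈ Finset.image₂ Δ C A, Δ (Δ b (f x)) (Δ b (g x)) = x := by
    intro x hx
    rw [h1, ← hfg x hx]
  have hinj : Set.InjOn (fun x => (Δ b (f x), Δ b (g x))) ↑(Finset.image₂ Δ C A) := by
    intro x hx y hy hxy
    simp only [Prod.mk.injEq] at hxy
    rw [← key x hx, ← key y hy, hxy.1, hxy.2]
  refine ⟨hinj, ?_⟩
  calc (Finset.image₂ Δ C A).card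
      ≤ ((Finset.image₂ Δ {b} C) ×ˢ (Finset.image₂ Δ {b} A)).card := by
        apply Finset.card_le_card_of_injOn (fun x => (Δ b (f x), Δ b (g x)))
        · intro x hx
          simp only [Finset.mem_coe, Finset.mem_product, Finset.mem_image₂, Finset.mem_singleton]
          exact ⟨⟨b, rfl, f x, hf x hx, rfl⟩, ⟨b, rfl, g x, hg x hx, rfl⟩⟩
        · exact fun x hx y hy h => hinj hx hy h
    _ = _ := Finset.card_product _ _
end
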